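/- Let u, v ≥ 1 be integers, set n = u + v, and let J_n(x) = (h_{n,2}(x))^4 / C(n+1,2)^4 − h_{n,3}(x) · (h_{n,1}(x))^5 / (C(n+2,3) · n^5). Then for all t, r > 0, J_n evaluated at the point with u coordinates equal to t and v coordinates equal to r is nonnegative: J_n(t,…,t,r,…,r) ≥ 0. -/
import Mathlib


/-- The complete homogeneous symmetric polynomial `h_{n,k}`, as a function on `ℝ^n`:
the sum of all monomials of total degree `k` in `x 0, …, x (n-1)` (with `h_{n,0} = 1`). -/
noncomputable def hsym (n k : ℕ) (x : Fin n → ℝ) : ℝ :=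
  ∑ d ∈ Finset.Nat.antidiagonalTuple n k, ∏ i, x i ^ d i

/-- `J_n = H_{n,(2^4)} − H_{n,(3,1^5)}` as a function on `ℝ^n`. -/
noncomputable def Jfun (n : ℕ) (x : Fin n → ℝ) : ℝ :=
  (hsym n 2 x) ^ 4 / (((n + 1).choose 2 : ℝ)) ^ 4 -
    hsym n 3 x * (hsym n 1 x) ^ 5 / (((n + 2).choose 3 : ℝ) * (n : ℝ) ^ 5)

lemma hsym_zero (n : ℕ) (x : Fin n → ℝ) : hsym n 0 x = 1 := by
  rw [hsym, Finset.Nat.antidiagonalTuple_zero_right]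
  simp

lemma hsym_nil (k : ℕ) (x : Fin 0 → ℝ) : hsym 0 (k + 1) x = 0 := by
  rw [hsym, Finset.Nat.antidiagonalTuple_zero_succ]
  simp

lemma hsym_succ (n k : ℕ) (x : Fin (n + 1) → ℝ) :
    hsym (n + 1) k x =
      ∑ i ∈ Finset.range (k + 1), x (Fin.last n) ^ i * hsym n (k - i) (x ∘ Fin.castSucc) := by
  classical
  have h : ∑ i ∈ Finset.range (k + 1), x (Fin.last n) ^ i * hsym n (k - i) (x ∘ Fin.castSucc)
      = ∑ p ∈ (Finset.range (k + 1)).sigma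
          (fun i => Finset.Nat.antidiagonalTuple n (k - i)),
          x (Fin.last n) ^ p.1 * ∏ j, ((x ∘ Fin.castSucc) j) ^ p.2 j := by
    rw [Finset.sum_sigma]
    exact Finset.sum_congr rfl fun i _ => by rw [hsym, Finset.mul_sum]
  rw [hsym, h]
  refine Finset.sum_nbij' (fun d => ⟨d (Fin.last n), d ∘ Fin.castSucc⟩)
    (fun p => Fin.snoc p.2 p.1) ?_ ?_ ?_ ?_ ?_
  · intro d hd
    rw [Finset.Nat.mem_antidiagonalTuple] at hd
    rw [Fin.sum_univ_castSucc] at hd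
    refine Finset.mem_sigma.2 ⟨Finset.mem_range.2 ?_, ?_⟩
    · exact Nat.lt_succ_of_le (by rw [← hd]; exact Nat.le_add_left _ _)
    · rw [Finset.Nat.mem_antidiagonalTuple]
      simp only [Function.comp_apply]
      exact Nat.eq_sub_of_add_eq hd
  · intro p hp
    rw [Finset.mem_sigma, Finset.mem_range, Finset.Nat.mem_antidiagonalTuple] at hp
    rw [Finset.Nat.mem_antidiagonalTuple, Fin.sum_univ_castSucc]
    simp only [Fin.snoc_castSucc, Fin.snoc_last]
    rw [hp.2]
    have := hp.1
    omega
  · intro d _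
    simp only [Function.comp_def]
    exact Fin.snoc_init_self d
  · intro p hp
    refine Sigma.ext ?_ ?_ <;> simp [Fin.snoc_last, Function.comp_def]
  · intro d _
    rw [Fin.prod_univ_castSucc]
    simp only [Function.comp_apply]
    ring

lemma cast_choose2 (n : ℕ) : ((n + 1).choose 2 : ℝ) = (n : ℝ) * ((n : ℝ) + 1) / 2 := by
  have h := Nat.add_one_mul_choose_eq n 1
  rw [Nat.choose_one_right] at h
  have h' : ((Nat.succ n * n : ℕ) : ℝ) = (((n + 1).choose 2) * 2 : ℕ) := by
    rw [h]
  push_cast [Nat.succ_eq_add_one] at h'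
  linarith

lemma cast_choose3 (n : ℕ) :
    ((n + 2).choose 3 : ℝ) = (n : ℝ) * ((n : ℝ) + 1) * ((n : ℝ) + 2) / 6 := by
  have h := Nat.add_one_mul_choose_eq (n + 1) 2
  have h' : ((Nat.succ (n + 1) * ((n + 1).choose 2) : ℕ) : ℝ) = (((n + 2).choose 3) * 3 : ℕ) := by
    rw [h]
  push_cast [Nat.succ_eq_add_one] at h'
  rw [cast_choose2 n] at h'
  linarith

section Const

lemma hsym1_const (n : ℕ) (c : ℝ) : hsym n 1 (fun _ => c) = (n : ℝ) * c := by
  induction n with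
  | zero => rw [hsym_nil]; simp
  | succ m ih =>
    rw [hsym_succ]
    have h0 : ((fun (_ : Fin (m + 1)) => c) ∘ Fin.castSucc) = (fun (_ : Fin m) => c) := rfl
    rw [h0]
    simp only [Finset.sum_range_succ, Finset.sum_range_one]
    norm_num
    rw [ih, hsym_zero]
    push_cast
    ring

lemma hsym2_const (n : ℕ) (c : ℝ) : hsym n 2 (fun _ => c) = ((n + 1).choose 2 : ℝ) * c ^ 2 := by
  induction n with
  | zero => rw [hsym_nil]; simp
  | succ m ih =>
    rw [hsym_succ]
    have h0 : ((fun (_ : Fin (m + 1)) => c) ∘ Fin.castSucc) = (fun (_ : Fin m) => c) := rfl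
    rw [h0]
    simp only [Finset.sum_range_succ, Finset.sum_range_one]
    norm_num
    rw [ih, hsym1_const, hsym_zero]
    simp only [cast_choose2]
    push_cast
    ring

lemma hsym3_const (n : ℕ) (c : ℝ) : hsym n 3 (fun _ => c) = ((n + 2).choose 3 : ℝ) * c ^ 3 := by
  induction n with
  | zero => rw [hsym_nil]; simp
  | succ m ih =>
    rw [hsym_succ]
    have h0 : ((fun (_ : Fin (m + 1)) => c) ∘ Fin.castSucc) = (fun (_ : Fin m) => c) := rfl
    rw [h0]
    simp only [Finset.sum_range_succ, Finset.sum_range_one]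
    norm_num
    rw [ih, hsym2_const, hsym1_const, hsym_zero]
    simp only [cast_choose2, cast_choose3]
    push_cast
    ring

end Const

section TwoBlock

variable (t r : ℝ)

/-- The two-block point. -/
noncomputable def tb (u v : ℕ) : Fin (u + v) → ℝ := fun i => if (i : ℕ) < u then t else r

lemma tb_zero (u : ℕ) : tb t r u 0 = fun _ => t := by
  funext i
  have hi : (i : ℕ) < u + 0 := i.isLt
  simp only [tb]
  rw [if_pos (by omega : (i : ℕ) < u)]

lemma tb_succ_last (u v : ℕ) : tb t r u (v + 1) (Fin.last (u + v)) = r := by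
  simp only [tb, Fin.val_last]
  rw [if_neg (by omega)]

lemma tb_succ_cast (u v : ℕ) : (tb t r u (v + 1)) ∘ Fin.castSucc = tb t r u v := by
  funext i
  simp only [Function.comp_apply, tb, Fin.coe_castSucc]

lemma tb1 (u v : ℕ) : hsym (u + v) 1 (tb t r u v) = (u : ℝ) * t + (v : ℝ) * r := by
  induction v with
  | zero => rw [tb_zero, hsym1_const]; norm_num
  | succ m ih =>
    have e : hsym (u + (m + 1)) 1 (tb t r u (m + 1))
        = hsym ((u + m) + 1) 1 (tb t r u (m + 1)) := rfl
    rw [e, hsym_succ, tb_succ_cast, tb_succ_last]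
    simp only [Finset.sum_range_succ, Finset.sum_range_one]
    norm_num
    rw [ih, hsym_zero]
    push_cast
    ring

lemma tb2 (u v : ℕ) : hsym (u + v) 2 (tb t r u v)
    = ((u + 1).choose 2 : ℝ) * t ^ 2 + (u : ℝ) * (v : ℝ) * (t * r)
      + ((v + 1).choose 2 : ℝ) * r ^ 2 := by
  induction v with
  | zero => rw [tb_zero, hsym2_const]; norm_num [Nat.choose]
  | succ m ih =>
    have e : hsym (u + (m + 1)) 2 (tb t r u (m + 1))
        = hsym ((u + m) + 1) 2 (tb t r u (m + 1)) := rfl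
    rw [e, hsym_succ, tb_succ_cast, tb_succ_last]
    simp only [Finset.sum_range_succ, Finset.sum_range_one]
    norm_num
    rw [ih, tb1, hsym_zero]
    simp only [cast_choose2]
    push_cast
    ring

lemma tb3 (u v : ℕ) : hsym (u + v) 3 (tb t r u v)
    = ((u + 2).choose 3 : ℝ) * t ^ 3 + ((u + 1).choose 2 : ℝ) * (v : ℝ) * (t ^ 2 * r)
      + (u : ℝ) * ((v + 1).choose 2 : ℝ) * (t * r ^ 2) + ((v + 2).choose 3 : ℝ) * r ^ 3 := by
  induction v with
  | zero => rw [tb_zero, hsym3_const]; norm_num [Nat.choose]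
  | succ m ih =>
    have e : hsym (u + (m + 1)) 3 (tb t r u (m + 1))
        = hsym ((u + m) + 1) 3 (tb t r u (m + 1)) := rfl
    rw [e, hsym_succ, tb_succ_cast, tb_succ_last]
    simp only [Finset.sum_range_succ, Finset.sum_range_one]
    norm_num
    rw [ih, tb2, tb1, hsym_zero]
    simp only [cast_choose2, cast_choose3]
    push_cast
    ring

end TwoBlock



noncomputable def C0 (p q : ℝ) : ℝ := (94:ℝ) * p^0 * q^0 + (587:ℝ) * p^0 * q^1 + (1588:ℝ) * p^0 * q^2 + (2435:ℝ) * p^0 * q^3 + (2324:ℝ) * p^0 * q^4 + (1426:ℝ) * p^0 * q^5 + (560:ℝ) * p^0 * q^6 + (135:ℝ) * p^0 * q^7 + (18:ℝ) * p^0 * q^8 + (1:ℝ) * p^0 * q^9 + (158:ℝ) * p^1 * q^0 + (961:ℝ) * p^1 * q^1 + (2521:ℝ) * p^1 * q^2 + (3728:ℝ) * p^1 * q^3 + (3408:ℝ) * p^1 * q^4 + (1986:ℝ) * p^1 * q^5 + (733:ℝ) * p^1 * q^6 + (164:ℝ) * p^1 * q^7 + (20:ℝ) * p^1 * q^8 +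 (1:ℝ) * p^1 * q^9 + (74:ℝ) * p^2 * q^0 + (429:ℝ) * p^2 * q^1 + (1060:ℝ) * p^2 * q^2 + (1452:ℝ) * p^2 * q^3 + (1200:ℝ) * p^2 * q^4 + (609:ℝ) * p^2 * q^5 + (184:ℝ) * p^2 * q^6 + (30:ℝ) * p^2 * q^7 + (2:ℝ) * p^2 * q^8 + (10:ℝ) * p^3 * q^0 + (55:ℝ) * p^3 * q^1 + (127:ℝ) * p^3 * q^2 + (159:ℝ) * p^3 * q^3 + (116:ℝ) * p^3 * q^4 + (49:ℝ) * p^3 * q^5 + (11:ℝ) * p^3 * q^6 + (1:ℝ) * p^3 * q^7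

noncomputable def C1 (p q : ℝ) : ℝ := (240:ℝ) * p^0 * q^0 + (1336:ℝ) * p^0 * q^1 + (3156:ℝ) * p^0 * q^2 + (4114:ℝ) * p^0 * q^3 + (3220:ℝ) * p^0 * q^4 + (1540:ℝ) * p^0 * q^5 + (436:ℝ) * p^0 * q^6 + (66:ℝ) * p^0 * q^7 + (4:ℝ) * p^0 * q^8 + (676:ℝ) * p^1 * q^0 + (3722:ℝ) * p^1 * q^1 + (8680:ℝ) * p^1 * q^2 + (11146:ℝ) * p^1 * q^3 + (8574:ℝ) * p^1 * q^4 + (4022:ℝ) * p^1 * q^5 + (1116:ℝ) * p^1 * q^6 + (166:ℝ) * p^1 * q^7 + (10:ℝ) * p^1 * q^8 + (644:ℝ) * p^2 * q^0 + (3470:ℝ) * p^2 * q^1 + (7878:ℝ) * p^2 * q^2 + (9780:ℝ) * p^2 * q^3 + (7206:ℝ) * p^2 * q^4 + (3198:ℝ) * p^2 * q^5 + (826:ℝ) * p^2 * q^6 + (112:ℝ) * p^2 * q^7 + (6:ℝ) * p^2 * q^8 + (236:ℝ) * p^3 * q^0 + (1222:ℝ) * p^3 * q^1 + (2632:ℝ)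 * p^3 * q^2 + (3040:ℝ) * p^3 * q^3 + (2020:ℝ) * p^3 * q^4 + (766:ℝ) * p^3 * q^5 + (152:ℝ) * p^3 * q^6 + (12:ℝ) * p^3 * q^7 + (28:ℝ) * p^4 * q^0 + (138:ℝ) * p^4 * q^1 + (278:ℝ) * p^4 * q^2 + (292:ℝ) * p^4 * q^3 + (168:ℝ) * p^4 * q^4 + (50:ℝ) * p^4 * q^5 + (6:ℝ) * p^4 * q^6

noncomputable def C2 (p q : ℝ) : ℝ := (354:ℝ) * p^0 * q^0 + (1724:ℝ) * p^0 * q^1 + (3490:ℝ) * p^0 * q^2 + (3787:ℝ) * p^0 * q^3 + (2362:ℝ) * p^0 * q^4 + (838:ℝ) * p^0 * q^5 + (154:ℝ) * p^0 * q^6 + (11:ℝ) * p^0 * q^7 + (1307:ℝ) * p^1 * q^0 + (6319:ℝ) * p^1 * q^1 + (12676:ℝ) * p^1 * q^2 + (13599:ℝ) * p^1 * q^3 + (8363:ℝ) * p^1 * q^4 + (2917:ℝ) * p^1 * q^5 + (526:ℝ) * p^1 * q^6 + (37:ℝ) * p^1 * q^7 + (1824:ℝ) * p^2 * q^0 + (8708:ℝ)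 * p^2 * q^1 + (17184:ℝ) * p^2 * q^2 + (18041:ℝ) * p^2 * q^3 + (10780:ℝ) * p^2 * q^4 + (3618:ℝ) * p^2 * q^5 + (620:ℝ) * p^2 * q^6 + (41:ℝ) * p^2 * q^7 + (1178:ℝ) * p^3 * q^0 + (5506:ℝ) * p^3 * q^1 + (10558:ℝ) * p^3 * q^2 + (10651:ℝ) * p^3 * q^3 + (6010:ℝ) * p^3 * q^4 + (1852:ℝ) * p^3 * q^5 + (278:ℝ) * p^3 * q^6 + (15:ℝ) * p^3 * q^7 + (342:ℝ) * p^4 * q^0 + (1544:ℝ) * p^4 * q^1 + (2818:ℝ) * p^4 * q^2 + (2640:ℝ) * p^4 * q^3 + (1322:ℝ) * p^4 * q^4 + (328:ℝ) * p^4 * q^5 + (30:ℝ) * p^4 * q^6 + (35:ℝ) * p^5 * q^0 + (151:ℝ) * p^5 * q^1 + (258:ℝ) * p^5 * q^2 + (218:ℝ) * p^5 * q^3 + (91:ℝ) * p^5 * q^4 + (15:ℝ) * p^5 * q^5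

noncomputable def C3 (p q : ℝ) : ℝ := (352:ℝ) * p^0 * q^0 + (1556:ℝ) * p^0 * q^1 + (2760:ℝ) * p^0 * q^2 + (2488:ℝ) * p^0 * q^3 + (1184:ℝ) * p^0 * q^4 + (276:ℝ) * p^0 * q^5 + (24:ℝ) * p^0 * q^6 + (1556:ℝ) * p^1 * q^0 + (6796:ℝ) * p^1 * q^1 + (11876:ℝ) * p^1 * q^2 + (10504:ℝ) * p^1 * q^3 + (4876:ℝ) * p^1 * q^4 + (1100:ℝ) * p^1 * q^5 + (92:ℝ) * p^1 * q^6 + (2760:ℝ) * p^2 * q^0 + (11876:ℝ) * p^2 * q^1 + (20356:ℝ) * p^2 * q^2 + (17544:ℝ) * p^2 * q^3 + (7856:ℝ) * p^2 * q^4 + (1684:ℝ) * p^2 * q^5 + (132:ℝ) * p^2 * q^6 + (2488:ℝ) * p^3 * q^0 + (10504:ℝ) * p^3 * q^1 + (17544:ℝ) * p^3 * q^2 + (14572:ℝ) * p^3 * q^3 + (6172:ℝ) * p^3 * q^4 + (1212:ℝ) * p^3 * q^5 + (84:ℝ) * p^3 * q^6 + (1184:ℝ) * p^4 * q^0 + (4876:ℝ)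 * p^4 * q^1 + (7856:ℝ) * p^4 * q^2 + (6172:ℝ) * p^4 * q^3 + (2380:ℝ) * p^4 * q^4 + (392:ℝ) * p^4 * q^5 + (20:ℝ) * p^4 * q^6 + (276:ℝ) * p^5 * q^0 + (1100:ℝ) * p^5 * q^1 + (1684:ℝ) * p^5 * q^2 + (1212:ℝ) * p^5 * q^3 + (392:ℝ) * p^5 * q^4 + (40:ℝ) * p^5 * q^5 + (24:ℝ) * p^6 * q^0 + (92:ℝ) * p^6 * q^1 + (132:ℝ) * p^6 * q^2 + (84:ℝ) * p^6 * q^3 + (20:ℝ) * p^6 * q^4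

noncomputable def C4 (p q : ℝ) : ℝ := (354:ℝ) * p^0 * q^0 + (1307:ℝ) * p^0 * q^1 + (1824:ℝ) * p^0 * q^2 + (1178:ℝ) * p^0 * q^3 + (342:ℝ) * p^0 * q^4 + (35:ℝ) * p^0 * q^5 + (1724:ℝ) * p^1 * q^0 + (6319:ℝ) * p^1 * q^1 + (8708:ℝ) * p^1 * q^2 + (5506:ℝ) * p^1 * q^3 + (1544:ℝ) * p^1 * q^4 + (151:ℝ) * p^1 * q^5 + (3490:ℝ) * p^2 * q^0 + (12676:ℝ) * p^2 * q^1 + (17184:ℝ) * p^2 * q^2 + (10558:ℝ) * p^2 * q^3 + (2818:ℝ) * p^2 * q^4 + (258:ℝ) * p^2 * q^5 + (3787:ℝ) * p^3 * q^0 + (13599:ℝ) * p^3 * q^1 + (18041:ℝ) * p^3 * q^2 + (10651:ℝ) * p^3 * q^3 + (2640:ℝ) * p^3 * q^4 + (218:ℝ) * p^3 * q^5 + (2362:ℝ) * p^4 * q^0 + (8363:ℝ) * p^4 * q^1 + (10780:ℝ) * p^4 * q^2 + (6010:ℝ) * p^4 * q^3 + (1322:ℝ) * p^4 * q^4 + (91:ℝ)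 * p^4 * q^5 + (838:ℝ) * p^5 * q^0 + (2917:ℝ) * p^5 * q^1 + (3618:ℝ) * p^5 * q^2 + (1852:ℝ) * p^5 * q^3 + (328:ℝ) * p^5 * q^4 + (15:ℝ) * p^5 * q^5 + (154:ℝ) * p^6 * q^0 + (526:ℝ) * p^6 * q^1 + (620:ℝ) * p^6 * q^2 + (278:ℝ) * p^6 * q^3 + (30:ℝ) * p^6 * q^4 + (11:ℝ) * p^7 * q^0 + (37:ℝ) * p^7 * q^1 + (41:ℝ) * p^7 * q^2 + (15:ℝ) * p^7 * q^3

noncomputable def C5 (p q : ℝ) : ℝ := (240:ℝ) * p^0 * q^0 + (676:ℝ) * p^0 * q^1 + (644:ℝ) * p^0 * q^2 + (236:ℝ) * p^0 * q^3 + (28:ℝ) * p^0 * q^4 + (1336:ℝ) * p^1 * q^0 + (3722:ℝ) * p^1 * q^1 + (3470:ℝ) * p^1 * q^2 + (1222:ℝ) * p^1 * q^3 + (138:ℝ) * p^1 * q^4 + (3156:ℝ) * p^2 * q^0 + (8680:ℝ) * p^2 * q^1 + (7878:ℝ) * p^2 * q^2 + (2632:ℝ) * p^2 * q^3 + (278:ℝ)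 * p^2 * q^4 + (4114:ℝ) * p^3 * q^0 + (11146:ℝ) * p^3 * q^1 + (9780:ℝ) * p^3 * q^2 + (3040:ℝ) * p^3 * q^3 + (292:ℝ) * p^3 * q^4 + (3220:ℝ) * p^4 * q^0 + (8574:ℝ) * p^4 * q^1 + (7206:ℝ) * p^4 * q^2 + (2020:ℝ) * p^4 * q^3 + (168:ℝ) * p^4 * q^4 + (1540:ℝ) * p^5 * q^0 + (4022:ℝ) * p^5 * q^1 + (3198:ℝ) * p^5 * q^2 + (766:ℝ) * p^5 * q^3 + (50:ℝ) * p^5 * q^4 + (436:ℝ) * p^6 * q^0 + (1116:ℝ) * p^6 * q^1 + (826:ℝ) * p^6 * q^2 + (152:ℝ) * p^6 * q^3 + (6:ℝ) * p^6 * q^4 + (66:ℝ) * p^7 * q^0 + (166:ℝ) * p^7 * q^1 + (112:ℝ) * p^7 * q^2 + (12:ℝ) * p^7 * q^3 + (4:ℝ) * p^8 * q^0 + (10:ℝ) * p^8 * q^1 + (6:ℝ) * p^8 * q^2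

noncomputable def C6 (p q : ℝ) : ℝ := (94:ℝ) * p^0 * q^0 + (158:ℝ) * p^0 * q^1 + (74:ℝ) * p^0 * q^2 + (10:ℝ) * p^0 * q^3 + (587:ℝ) * p^1 * q^0 + (961:ℝ) * p^1 * q^1 + (429:ℝ) * p^1 * q^2 + (55:ℝ) * p^1 * q^3 + (1588:ℝ) * p^2 * q^0 + (2521:ℝ) * p^2 * q^1 + (1060:ℝ) * p^2 * q^2 + (127:ℝ) * p^2 * q^3 + (2435:ℝ) * p^3 * q^0 + (3728:ℝ) * p^3 * q^1 + (1452:ℝ) * p^3 * q^2 + (159:ℝ) * p^3 * q^3 + (2324:ℝ) * p^4 * q^0 + (3408:ℝ) * p^4 * q^1 + (1200:ℝ) * p^4 * q^2 + (116:ℝ) * p^4 * q^3 + (1426:ℝ) * p^5 * q^0 + (1986:ℝ) * p^5 * q^1 + (609:ℝ) * p^5 * q^2 + (49:ℝ) * p^5 * q^3 + (560:ℝ) * p^6 * q^0 + (733:ℝ) * p^6 * q^1 + (184:ℝ) * p^6 * q^2 + (11:ℝ) * p^6 * q^3 + (135:ℝ) * p^7 * q^0 + (164:ℝ) * p^7 *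 q^1 + (30:ℝ) * p^7 * q^2 + (1:ℝ) * p^7 * q^3 + (18:ℝ) * p^8 * q^0 + (20:ℝ) * p^8 * q^1 + (2:ℝ) * p^8 * q^2 + (1:ℝ) * p^9 * q^0 + (1:ℝ) * p^9 * q^1

noncomputable def Qfun (p q t r : ℝ) : ℝ := C0 p q * t^0 * r^6 + C1 p q * t^1 * r^5 + C2 p q * t^2 * r^4 + C3 p q * t^3 * r^3 + C4 p q * t^4 * r^2 + C5 p q * t^5 * r^1 + C6 p q * t^6 * r^0
lemma C0_nonneg (p q : ℝ) (hp : 0 ≤ p) (hq : 0 ≤ q) : 0 ≤ C0 p q := by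
  rw [C0]
  repeat' first
  | apply add_nonneg
  | apply mul_nonneg
  | exact pow_nonneg hp _
  | exact hp
  | exact pow_nonneg hq _
  | exact hq
  | norm_num

lemma C1_nonneg (p q : ℝ) (hp : 0 ≤ p) (hq : 0 ≤ q) : 0 ≤ C1 p q := by
  rw [C1]
  repeat' first
  | apply add_nonneg
  | apply mul_nonneg
  | exact pow_nonneg hp _
  | exact hp
  | exact pow_nonneg hq _
  | exact hq
  | norm_num

lemma C2_nonneg (p q : ℝ) (hp : 0 ≤ p) (hq : 0 ≤ q) : 0 ≤ C2 p q := by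
  rw [C2]
  repeat' first
  | apply add_nonneg
  | apply mul_nonneg
  | exact pow_nonneg hp _
  | exact hp
  | exact pow_nonneg hq _
  | exact hq
  | norm_num

lemma C3_nonneg (p q : ℝ) (hp : 0 ≤ p) (hq : 0 ≤ q) : 0 ≤ C3 p q := by
  rw [C3]
  repeat' first
  | apply add_nonneg
  | apply mul_nonneg
  | exact pow_nonneg hp _
  | exact hp
  | exact pow_nonneg hq _
  | exact hq
  | norm_num

lemma C4_nonneg (p q : ℝ) (hp : 0 ≤ p) (hq : 0 ≤ q) : 0 ≤ C4 p q := by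
  rw [C4]
  repeat' first
  | apply add_nonneg
  | apply mul_nonneg
  | exact pow_nonneg hp _
  | exact hp
  | exact pow_nonneg hq _
  | exact hq
  | norm_num

lemma C5_nonneg (p q : ℝ) (hp : 0 ≤ p) (hq : 0 ≤ q) : 0 ≤ C5 p q := by
  rw [C5]
  repeat' first
  | apply add_nonneg
  | apply mul_nonneg
  | exact pow_nonneg hp _
  | exact hp
  | exact pow_nonneg hq _
  | exact hq
  | norm_num

lemma C6_nonneg (p q : ℝ) (hp : 0 ≤ p) (hq : 0 ≤ q) : 0 ≤ C6 p q := by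
  rw [C6]
  repeat' first
  | apply add_nonneg
  | apply mul_nonneg
  | exact pow_nonneg hp _
  | exact hp
  | exact pow_nonneg hq _
  | exact hq
  | norm_num

lemma Qfun_nonneg (p q t r : ℝ) (hp : 0 ≤ p) (hq : 0 ≤ q) (ht : 0 ≤ t) (hr : 0 ≤ r) :
    0 ≤ Qfun p q t r := by
  have h0 := C0_nonneg p q hp hq
  have h1 := C1_nonneg p q hp hq
  have h2 := C2_nonneg p q hp hq
  have h3 := C3_nonneg p q hp hq
  have h4 := C4_nonneg p q hp hq
  have h5 := C5_nonneg p q hp hq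
  have h6 := C6_nonneg p q hp hq
  rw [Qfun]
  exact (add_nonneg (add_nonneg (add_nonneg (add_nonneg (add_nonneg (add_nonneg (mul_nonneg (mul_nonneg h0 (pow_nonneg ht 0)) (pow_nonneg hr 6)) (mul_nonneg (mul_nonneg h1 (pow_nonneg ht 1)) (pow_nonneg hr 5))) (mul_nonneg (mul_nonneg h2 (pow_nonneg ht 2)) (pow_nonneg hr 4))) (mul_nonneg (mul_nonneg h3 (pow_nonneg ht 3)) (pow_nonneg hr 3))) (mul_nonneg (mul_nonneg h4 (pow_nonneg ht 4)) (pow_nonneg hr 2))) (mul_nonneg (mul_nonneg h5 (pow_nonneg ht 5)) (pow_nonneg hr 1))) (mul_nonneg (mul_nonneg h6 (pow_nonneg ht 6)) (pow_nonneg hr 0)))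

set_option maxHeartbeats 8000000 in
lemma key_ineq (a b t r : ℝ) (ha : 1 ≤ a) (hb : 1 ≤ b) (ht : 0 ≤ t) (hr : 0 ≤ r) :
    (a * (a+1) * (a+2) / 6 * t ^ 3 + a * (a+1) / 2 * b * (t ^ 2 * r)
        + a * (b * (b+1) / 2) * (t * r ^ 2) + b * (b+1) * (b+2) / 6 * r ^ 3)
      * (a * t + b * r) ^ 5 * ((a+b) * ((a+b)+1) / 2) ^ 4
    ≤ (a * (a+1) / 2 * t ^ 2 + a * b * (t * r) + b * (b+1) / 2 * r ^ 2) ^ 4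
      * ((a+b) * ((a+b)+1) * ((a+b)+2) / 6 * (a+b) ^ 5) := by
  have hp : (0:ℝ) ≤ a - 1 := by linarith
  have hq : (0:ℝ) ≤ b - 1 := by linarith
  have hQ := Qfun_nonneg (a-1) (b-1) t r hp hq ht hr
  have hfac : (0:ℝ) ≤ (a+b)^4*((a+b)+1)/96 :=
    div_nonneg (mul_nonneg (pow_nonneg (by linarith) 4) (by linarith)) (by norm_num)
  rw [← sub_nonneg]
  have hid : (a * (a+1) / 2 * t ^ 2 + a * b * (t * r) + b * (b+1) / 2 * r ^ 2) ^ 4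
      * ((a+b) * ((a+b)+1) * ((a+b)+2) / 6 * (a+b) ^ 5)
      - (a * (a+1) * (a+2) / 6 * t ^ 3 + a * (a+1) / 2 * b * (t ^ 2 * r)
        + a * (b * (b+1) / 2) * (t * r ^ 2) + b * (b+1) * (b+2) / 6 * r ^ 3)
      * (a * t + b * r) ^ 5 * ((a+b) * ((a+b)+1) / 2) ^ 4
      = (a+b)^4*((a+b)+1)/96 * ((t - r) ^ 2 * Qfun (a-1) (b-1) t r) := by
    simp only [Qfun, C0, C1, C2, C3, C4, C5, C6]
    ring
  rw [hid]
  exact mul_nonneg hfac (mul_nonneg (sq_nonneg _) hQ)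

set_option maxHeartbeats 4000000 in
/-- For `u, v ≥ 1` and `n = u + v`, the function `J_n` is nonnegative at every point
whose first `u` coordinates equal `t > 0` and whose remaining `v` coordinates equal
`r > 0`. -/
theorem Jfun_nonneg_on_two_block_points (u v : ℕ) (hu : 1 ≤ u) (hv : 1 ≤ v)
    (t r : ℝ) (ht : 0 < t) (hr : 0 < r) :
    0 ≤ Jfun (u + v) (fun i => if (i : ℕ) < u then t else r) := by
  have hx : (fun (i : Fin (u + v)) => if (i : ℕ) < u then t else r) = tb t r u v := rfl
  rw [hx]
  simp only [Jfun]
  rw [tb1, tb2, tb3, sub_nonneg]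
  have ha : (1:ℝ) ≤ (u : ℝ) := by exact_mod_cast hu
  have hb : (1:ℝ) ≤ (v : ℝ) := by exact_mod_cast hv
  simp only [cast_choose2, cast_choose3]
  set a : ℝ := (u : ℝ) with hadef
  set b : ℝ := (v : ℝ) with hbdef
  have hab : ((u + v : ℕ) : ℝ) = a + b := by rw [hadef, hbdef]; push_cast; ring
  rw [hab]
  have hapos : (0:ℝ) < a + b := by linarith
  rw [div_le_div_iff₀ (by positivity) (by positivity)]
  have hkey := key_ineq a b t r ha hb ht.le hr.le
  refine le_trans (le_of_eq (by ring)) (le_trans hkey (le_of_eq (by ring)))
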